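/- arXiv:2109.14774 — 2 statements merged into one kernel-verified Lean document; each statement's English description precedes it below -/
import Mathlib

section
/- Let m ≥ 3 and for n ≥ 1 let b_n be the number of permutations π in S_n avoiding 12⋯m as a consecutive pattern with ipk(π) = 0. Then, as an identity of formal power series in x with integer coefficients, (1 − 2x + x^m) · (1 + ∑_{n≥1} b_n x^n) = 1 − x. -/
/-- The one-line notation of a permutation `π` of `{1,…,n}`, read as a function on 0-based
positions: `permWord π j = π_{j+1}` (values are 1-based; out-of-range positions give `0`). -/
def permWord {n : ℕ} (π : Equiv.Perm (Fin n)) (j : ℕ) : ℕ :=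
  if h : j < n then ((π ⟨j, h⟩ : Fin n) : ℕ) + 1 else 0

/-- `π` contains `σ` as a consecutive pattern: some window of consecutive letters of `π`
has standardization `σ`, i.e. is order-isomorphic to the one-line word of `σ`. -/
def ContainsPat {n m : ℕ} (π : Equiv.Perm (Fin n)) (σ : Equiv.Perm (Fin m)) : Prop :=
  ∃ i : ℕ, i + m ≤ n ∧ ∀ j k : Fin m,
    (permWord π (i + (j : ℕ)) < permWord π (i + (k : ℕ)) ↔ permWord σ j < permWord σ k)

/-- The number of peaks of `π`: 1-based indices `i` with `2 ≤ i ≤ n-1` and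
`π_{i-1} < π_i > π_{i+1}`. -/
def pkCount {n : ℕ} (π : Equiv.Perm (Fin n)) : ℕ :=
  ((Finset.Icc 2 (n - 1)).filter fun i =>
    permWord π (i - 2) < permWord π (i - 1) ∧ permWord π i < permWord π (i - 1)).card

/-- The number of left peaks of `π`: 1-based indices `i ∈ [n-1]` that are peaks,
or `i = 1` with `π_1 > π_2`. -/
def lpkCount {n : ℕ} (π : Equiv.Perm (Fin n)) : ℕ :=
  ((Finset.Icc 1 (n - 1)).filter fun i =>
    (2 ≤ i ∧ permWord π (i - 2) < permWord π (i - 1) ∧ permWord π i < permWord π (i - 1))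
      ∨ (i = 1 ∧ permWord π 1 < permWord π 0)).card

/-- The number of peaks of `π⁻¹`. -/
def ipk {n : ℕ} (π : Equiv.Perm (Fin n)) : ℕ := pkCount π⁻¹

/-- The number of left peaks of `π⁻¹`. -/
def ilpk {n : ℕ} (π : Equiv.Perm (Fin n)) : ℕ := lpkCount π⁻¹

/-!
A permutation `π` has `ipk π = 0` exactly when `π⁻¹` decreases and then increases, that is, when
every entry of `π` is a left-to-right maximum or a left-to-right minimum. Such a permutation is
determined by its ascent word (entry `j + 1` exceeds entry `j` iff it is a new maximum), and every
binary word of length `n - 1` arises. Containing `12⋯m` consecutively means having `m - 1`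
consecutive ascents, so `b_n = c_{n-1}`, where `c_ℓ` counts the binary words of length `ℓ`
without `m - 1` consecutive ones (run-free words).
Prepending a letter to a run-free word of length `ℓ` creates a run exactly when the letter is a
one and the word starts with `m - 2` ones; those words are `1^{m-2}` itself and the words
`1^{m-2} 0 w` with `w` run-free of length `ℓ + 1 - m`. Hence `c_{ℓ+1} + c_{ℓ+1-m} = 2 c_ℓ` for
`m ≤ ℓ + 2` (natural subtraction, `c_0 = 1`) and `c_{ℓ+1} = 2 c_ℓ` otherwise, which is the identity
read coefficientwise.
-/

def NoTrueRun (r : ℕ) (s : ℕ → Bool) : Prop := ∀ i, ∃ j < r, s (i + j) = false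

/-- Words of length `ℓ` are encoded as sequences vanishing from `ℓ` on, so that a window running
past the end always contains a `false`. -/
def runFreeWords (r ℓ : ℕ) : Set (ℕ → Bool) := {s | (∀ i, ℓ ≤ i → s i = false) ∧ NoTrueRun r s}

instance (r ℓ : ℕ) : Finite (runFreeWords r ℓ) := by
  refine Finite.of_injective (fun s : runFreeWords r ℓ => fun i : Fin ℓ => s.1 i) ?_
  intro s t hst
  refine Subtype.ext (funext fun i => ?_)
  by_cases hi : i < ℓ
  · exact congrFun hst ⟨i, hi⟩
  · rw [s.2.1 i (not_lt.1 hi), t.2.1 i (not_lt.1 hi)]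

noncomputable def runFreeCount (r ℓ : ℕ) : ℕ := Nat.card (runFreeWords r ℓ)

lemma runFreeCount_zero {r : ℕ} (hr : 1 ≤ r) : runFreeCount r 0 = 1 := by
  rw [runFreeCount, Nat.card_eq_one_iff_exists]
  refine ⟨⟨fun _ => false, fun _ _ => rfl, fun _ => ⟨0, hr, rfl⟩⟩, ?_⟩
  rintro ⟨s, hs, -⟩
  ext i : 2
  exact hs i i.zero_le

def consBit (b : Bool) (s : ℕ → Bool) : ℕ → Bool
  | 0 => b
  | i + 1 => s i

lemma consBit_zero_tail (s : ℕ → Bool) : consBit (s 0) (fun i => s (i + 1)) = s := by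
  ext (_ | i) <;> rfl

lemma noTrueRun_consBit_iff {r : ℕ} (hr : 1 ≤ r) (b : Bool) (s : ℕ → Bool) :
    NoTrueRun r (consBit b s) ↔ NoTrueRun r s ∧ ¬(b = true ∧ ∀ j < r - 1, s j = true) := by
  constructor
  · intro h
    refine ⟨fun i => ?_, ?_⟩
    · obtain ⟨j, hj, hs⟩ := h (i + 1)
      exact ⟨j, hj, by rwa [Nat.add_right_comm] at hs⟩
    · rintro ⟨rfl, hrun⟩
      obtain ⟨_ | j, hj, hs⟩ := h 0
      · exact Bool.noConfusion hs
      · have hsj : s j = false := by simpa [consBit] using hs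
        simp [hrun j (by omega)] at hsj
  · rintro ⟨h, hb⟩ (_ | i)
    · cases b
      · exact ⟨0, hr, rfl⟩
      · push Not at hb
        obtain ⟨j, hj, hs⟩ := hb rfl
        exact ⟨j + 1, by omega, by simpa [consBit] using hs⟩
    · obtain ⟨j, hj, hs⟩ := h i
      exact ⟨j, hj, by rwa [Nat.add_right_comm]⟩

lemma runFreeCount_succ_add_card_startsWith {r : ℕ} (hr : 1 ≤ r) (ℓ : ℕ) :
    runFreeCount r (ℓ + 1) + Nat.card {s ∈ runFreeWords r ℓ | ∀ j < r - 1, s j = true}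
      = 2 * runFreeCount r ℓ := by
  let closesRun : Bool × runFreeWords r ℓ → Prop := fun p => p.1 = true ∧ ∀ j < r - 1, p.2.1 j = true
  have good : {p // ¬ closesRun p} ≃ runFreeWords r (ℓ + 1) :=
    { toFun := fun p => ⟨consBit p.1.1 p.1.2.1, fun
          | 0, h => absurd h (by omega)
          | i + 1, h => p.1.2.2.1 i (by omega),
        (noTrueRun_consBit_iff hr _ _).2 ⟨p.1.2.2.2, p.2⟩⟩
      invFun := fun t => ⟨⟨t.1 0, fun i => t.1 (i + 1), fun i hi => t.2.1 (i + 1) (by omega),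
          ((noTrueRun_consBit_iff hr _ _).1 (by rw [consBit_zero_tail]; exact t.2.2)).1⟩,
        ((noTrueRun_consBit_iff hr _ _).1 (by rw [consBit_zero_tail]; exact t.2.2)).2⟩
      left_inv := fun _ => rfl
      right_inv := fun t => Subtype.ext (consBit_zero_tail t.1) }
  have bad : {p // closesRun p} ≃ {s ∈ runFreeWords r ℓ | ∀ j < r - 1, s j = true} :=
    { toFun := fun p => ⟨p.1.2.1, p.1.2.2, p.2.2⟩
      invFun := fun s => ⟨(true, ⟨s.1, s.2.1⟩), rfl, s.2.2⟩
      left_inv := fun p => Subtype.ext (Prod.ext p.2.1.symm rfl)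
      right_inv := fun _ => rfl }
  rw [runFreeCount, runFreeCount, ← Nat.card_congr good, ← Nat.card_congr bad, add_comm,
    ← Nat.card_sum, Nat.card_congr (Equiv.sumCompl closesRun), Nat.card_prod,
    Nat.card_eq_fintype_card (α := Bool), Fintype.card_bool]

def trueRunThenFalse (k : ℕ) (s : ℕ → Bool) : ℕ → Bool := fun i =>
  if i < k then true else if i = k then false else s (i - (k + 1))

lemma noTrueRun_trueRunThenFalse {r k : ℕ} (hk : k < r) {s : ℕ → Bool} (hs : NoTrueRun r s) :
    NoTrueRun r (trueRunThenFalse k s) := by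
  intro i
  by_cases hi : i ≤ k
  · exact ⟨k - i, by omega, by simp [trueRunThenFalse, Nat.add_sub_cancel' hi]⟩
  · obtain ⟨j, hj, hsj⟩ := hs (i - (k + 1))
    refine ⟨j, hj, ?_⟩
    rw [trueRunThenFalse, if_neg (by omega), if_neg (by omega), ← hsj]
    congr 1
    omega

lemma card_startsWith_trueRun {r : ℕ} (hr : 1 ≤ r) (ℓ : ℕ) :
    Nat.card {s ∈ runFreeWords r ℓ | ∀ j < r - 1, s j = true}
      = if r ≤ ℓ + 1 then runFreeCount r (ℓ - r) else 0 := by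
  split_ifs with hℓ
  · refine Nat.card_congr
      { toFun := fun s => ⟨fun i => s.1 (i + r), fun i hi => s.2.1.1 (i + r) (by omega),
          fun i => ?_⟩
        invFun := fun s => ⟨trueRunThenFalse (r - 1) s.1, ⟨fun i hi => ?_,
          noTrueRun_trueRunThenFalse (Nat.sub_lt hr one_pos) s.2.2⟩, fun j hj => if_pos hj⟩
        left_inv := fun s => Subtype.ext (funext fun i => ?_)
        right_inv := fun s => Subtype.ext (funext fun i => ?_) }
    · obtain ⟨j, hj, hsj⟩ := s.2.1.2 (i + r)
      exact ⟨j, hj, by rwa [Nat.add_right_comm] at hsj⟩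
    · rw [trueRunThenFalse, if_neg (by omega)]
      split_ifs
      · rfl
      · exact s.2.1 _ (by omega)
    · simp only [trueRunThenFalse]
      split_ifs with h₁ h₂
      · exact (s.2.2 i h₁).symm
      · obtain ⟨j, hj, hsj⟩ := s.2.1.2 0
        have : j = r - 1 := by
          by_contra hne
          simp [s.2.2 j (by omega)] at hsj
        subst this
        rw [h₂, ← hsj, zero_add]
      · rw [show i - (r - 1 + 1) + r = i by omega]
    · simp only [trueRunThenFalse, if_neg (show ¬ i + r < r - 1 by omega),
        if_neg (show i + r ≠ r - 1 by omega)]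
      rw [show i + r - (r - 1 + 1) = i by omega]
  · rw [Nat.card_eq_zero]
    left
    refine ⟨fun s => ?_⟩
    simpa [s.2.1.1 ℓ le_rfl] using s.2.2 ℓ (by omega)

lemma runFreeCount_recurrence {r : ℕ} (hr : 1 ≤ r) (ℓ : ℕ) :
    runFreeCount r (ℓ + 1) + (if r ≤ ℓ + 1 then runFreeCount r (ℓ - r) else 0)
      = 2 * runFreeCount r ℓ := by
  rw [← card_startsWith_trueRun hr, runFreeCount_succ_add_card_startsWith hr ℓ]

open PowerSeries in
lemma one_sub_two_mul_X_add_X_pow_mul_mk {R : Type*} [CommRing R] {m : ℕ} (hm : 2 ≤ m)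
    {f : ℕ → R} (h0 : f 0 = 1) (h1 : f 1 = 1)
    (hrec : ∀ n, f (n + 2) + (if m ≤ n + 2 then f (n + 2 - m) else 0) = 2 * f (n + 1)) :
    (1 - 2 * X + X ^ m : R⟦X⟧) * mk f = 1 - X := by
  have expand : (1 - 2 * X + X ^ m : R⟦X⟧) * mk f = mk f - 2 • (X * mk f) + X ^ m * mk f := by
    rw [two_smul]; ring
  ext (_ | _ | n) <;> simp only [expand, map_add, map_sub, map_nsmul, coeff_X_pow_mul', coeff_mk,
    coeff_zero_X_mul, coeff_succ_X_mul, coeff_one, coeff_X]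
  · simp [h0, show ¬ m ≤ 0 by omega]
  · norm_num [h0, h1, show ¬ m ≤ 1 by omega]
  · simp only [show n + 1 + 1 ≠ 0 by omega, show n + 1 + 1 ≠ 1 by omega, if_false, sub_zero]
    rw [two_nsmul, ← two_mul, ← hrec n]
    ring

section PermWord

variable {n : ℕ} (π : Equiv.Perm (Fin n))

lemma permWord_of_lt {p : ℕ} (hp : p < n) : permWord π p = π ⟨p, hp⟩ + 1 := dif_pos hp

lemma permWord_of_le {p : ℕ} (hp : n ≤ p) : permWord π p = 0 := dif_neg (not_lt.2 hp)

lemma permWord_lt_permWord_iff {p q : ℕ} (hp : p < n) (hq : q < n) :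
    permWord π p < permWord π q ↔ π ⟨p, hp⟩ < π ⟨q, hq⟩ := by
  rw [permWord_of_lt π hp, permWord_of_lt π hq, Nat.add_lt_add_iff_right, Fin.val_fin_lt]

lemma permWord_inv_apply {p : ℕ} (hp : p < n) : permWord π⁻¹ (π ⟨p, hp⟩) = p + 1 := by
  rw [permWord_of_lt _ (π _).isLt, Fin.eta, Equiv.Perm.coe_inv, Equiv.symm_apply_apply]

lemma permWord_apply_inv {v : ℕ} (hv : v < n) : permWord π (π⁻¹ ⟨v, hv⟩) = v + 1 := by
  simpa using permWord_inv_apply π⁻¹ hv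

lemma permWord_injOn : Set.InjOn (permWord π) (Set.Iio n) := by
  intro p hp q hq h
  rw [permWord_of_lt π hp, permWord_of_lt π hq, Nat.add_right_cancel_iff, Fin.val_inj,
    π.injective.eq_iff] at h
  exact Fin.mk.inj_iff.1 h

lemma pkCount_eq_zero_iff : pkCount π = 0 ↔ ∀ w, w + 2 < n →
    ¬ (permWord π w < permWord π (w + 1) ∧ permWord π (w + 2) < permWord π (w + 1)) := by
  rw [pkCount, Finset.card_eq_zero, Finset.filter_eq_empty_iff]
  constructor
  · intro h w hw
    simpa using h (Finset.mem_Icc.2 ⟨le_add_self, by omega⟩)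
  · intro h i hi
    obtain ⟨w, rfl⟩ : ∃ w, i = w + 2 := ⟨i - 2, by grind⟩
    simpa using h w (by grind)

end PermWord

section Ascents

variable {n : ℕ} (π : Equiv.Perm (Fin n))

def ascentWord (j : ℕ) : Bool := decide (permWord π j < permWord π (j + 1))

lemma ascentWord_eq_false {j : ℕ} (hj : n ≤ j + 1) : ascentWord π j = false := by
  simp [ascentWord, permWord_of_le π hj]

lemma permWord_one {m : ℕ} (j : Fin m) : permWord (1 : Equiv.Perm (Fin m)) j = j + 1 :=
  permWord_of_lt 1 j.isLt

lemma windowMatchesOne_iff {m : ℕ} (w : ℕ → ℕ) (i : ℕ) :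
    (∀ j k : Fin m, (w (i + j) < w (i + k) ↔
      permWord (1 : Equiv.Perm (Fin m)) j < permWord (1 : Equiv.Perm (Fin m)) k)) ↔
      ∀ j, j + 1 < m → w (i + j) < w (i + j + 1) := by
  simp only [permWord_one, Nat.add_lt_add_iff_right, Fin.val_fin_lt]
  constructor
  · intro h j hj
    exact (h ⟨j, by omega⟩ ⟨j + 1, hj⟩).2 (Fin.mk_lt_mk.2 j.lt_add_one)
  · intro h
    have hmono : StrictMonoOn (fun j => w (i + j)) (Set.Iio m) :=
      strictMonoOn_of_lt_succ Set.ordConnected_Iio fun j _ _ hj => h j hj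
    exact fun j k => hmono.lt_iff_lt j.isLt k.isLt

lemma containsPat_one_iff {m : ℕ} (hm : 2 ≤ m) :
    ContainsPat π (1 : Equiv.Perm (Fin m)) ↔ ∃ i, ∀ j < m - 1, ascentWord π (i + j) = true := by
  simp only [ContainsPat, windowMatchesOne_iff (permWord π)]
  constructor
  · rintro ⟨i, -, h⟩
    exact ⟨i, fun j hj => by simpa [ascentWord, ← add_assoc] using h j (by omega)⟩
  · rintro ⟨i, h⟩
    refine ⟨i, ?_, fun j hj => by simpa [ascentWord, ← add_assoc] using h j (by omega)⟩
    by_contra! hi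
    simpa [ascentWord_eq_false π (by omega : n ≤ i + (m - 2) + 1)] using h (m - 2) (by omega)

lemma not_containsPat_one_iff {m : ℕ} (hm : 2 ≤ m) :
    ¬ ContainsPat π (1 : Equiv.Perm (Fin m)) ↔ NoTrueRun (m - 1) (ascentWord π) := by
  simp [containsPat_one_iff π hm, NoTrueRun]

end Ascents

section NoPeaks

variable {α : Type*} [LinearOrder α] {n : ℕ} {g : ℕ → α}

lemma exists_ascent_of_lt {a b : ℕ} (hab : a < b) (h : g a < g b) :
    ∃ w, a ≤ w ∧ w < b ∧ g w < g (w + 1) := by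
  by_contra! H
  have hanti : AntitoneOn g (Set.Icc a b) :=
    antitoneOn_of_succ_le Set.ordConnected_Icc fun w _ hw hw1 => H w hw.1 (by simpa using hw1.2)
  exact (hanti ⟨le_rfl, hab.le⟩ ⟨hab.le, le_rfl⟩ hab.le).not_gt h

lemma strictMonoOn_Ico_of_noPeaks (hg : Set.InjOn g (Set.Iio n))
    (hpk : ∀ w, w + 2 < n → ¬ (g w < g (w + 1) ∧ g (w + 2) < g (w + 1))) {w : ℕ}
    (hw : g w < g (w + 1)) : StrictMonoOn g (Set.Ico w n) := by
  have hup : ∀ x, w ≤ x → x + 1 < n → g x < g (x + 1) := by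
    intro x hx
    induction x, hx using Nat.le_induction with
    | base => exact fun _ => hw
    | succ x _ ih =>
      intro hx
      have hne : g (x + 2) ≠ g (x + 1) := fun h => by
        have := hg (Set.mem_Iio.2 hx) (Set.mem_Iio.2 (by omega)) h
        omega
      exact lt_of_le_of_ne (not_lt.1 fun h => hpk x hx ⟨ih (by omega), h⟩) hne.symm
  exact strictMonoOn_of_lt_succ Set.ordConnected_Ico fun x _ hx hx1 => hup x hx.1 hx1.2

lemma lt_of_noPeaks (hg : Set.InjOn g (Set.Iio n))
    (hpk : ∀ w, w + 2 < n → ¬ (g w < g (w + 1) ∧ g (w + 2) < g (w + 1))) {a b c : ℕ}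
    (hab : a < b) (hbc : b < c) (hc : c < n) (h : g a < g b) : g b < g c := by
  obtain ⟨w, haw, hwb, hw⟩ := exists_ascent_of_lt hab h
  exact strictMonoOn_Ico_of_noPeaks hg hpk hw ⟨by omega, by omega⟩ ⟨by omega, hc⟩ hbc

end NoPeaks

section LRExtremal

variable {n : ℕ}

/-- Every entry of `π` is a left-to-right maximum or a left-to-right minimum. -/
def IsLRExtremal (π : Equiv.Perm (Fin n)) : Prop :=
  ∀ p q, p < q → (permWord π p < permWord π q ↔ permWord π 0 < permWord π q)

/- If the value of entry `q` lay strictly between those of entry `0` and of an entry `p < q`, then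
in `π⁻¹` the positions of these three values would go up and then down, which a peak-free
injective sequence does not allow. -/
lemma isLRExtremal_of_ipk_eq_zero {π : Equiv.Perm (Fin n)} (h : ipk π = 0) : IsLRExtremal π := by
  have hpk := (pkCount_eq_zero_iff π⁻¹).1 h
  have hinj := permWord_injOn π⁻¹
  intro p q hpq
  rcases le_or_gt n q with hq | hq
  · simp [permWord_of_le π hq]
  have hp : p < n := hpq.trans hq
  have h0 : 0 < n := by omega
  have hgp := permWord_inv_apply π hp
  have hgq := permWord_inv_apply π hq
  have hg0 := permWord_inv_apply π h0
  rw [permWord_lt_permWord_iff π hp hq, permWord_lt_permWord_iff π h0 hq]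
  have hne (x y : ℕ) (hx : x < n) (hy : y < n) (hxy : x ≠ y) : (π ⟨x, hx⟩ : ℕ) ≠ π ⟨y, hy⟩ := by
    simpa [Fin.val_inj, π.injective.eq_iff] using hxy
  constructor
  · intro hlt
    by_contra hle
    have := lt_of_noPeaks hinj hpk hlt (lt_of_le_of_ne (not_lt.1 hle) (hne q 0 hq h0 (by omega)))
      (π _).isLt (by omega)
    omega
  · intro hlt
    by_contra hle
    have := lt_of_noPeaks hinj hpk hlt (lt_of_le_of_ne (not_lt.1 hle) (hne q p hq hp (by omega)))
      (π _).isLt (by omega)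
    omega

/- At a peak `w + 1` of `π⁻¹` the value `w + 2` comes after both `w + 1` and `w + 3`, so it is
neither a new maximum nor a new minimum. -/
lemma ipk_eq_zero_of_isLRExtremal {π : Equiv.Perm (Fin n)} (h : IsLRExtremal π) : ipk π = 0 := by
  rw [ipk, pkCount_eq_zero_iff]
  rintro w hw ⟨hup, hdown⟩
  simp only [permWord_lt_permWord_iff π⁻¹ (by omega : w < n) (by omega : w + 1 < n),
    permWord_lt_permWord_iff π⁻¹ hw (by omega : w + 1 < n), Fin.lt_def] at hup hdown
  have hpeak := h _ _ hup
  have hpeak' := h _ _ hdown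
  simp only [permWord_apply_inv] at hpeak hpeak'
  exact absurd (hpeak'.2 (hpeak.1 (by omega))) (by omega)

lemma ipk_eq_zero_iff_isLRExtremal (π : Equiv.Perm (Fin n)) : ipk π = 0 ↔ IsLRExtremal π :=
  ⟨isLRExtremal_of_ipk_eq_zero, ipk_eq_zero_of_isLRExtremal⟩

end LRExtremal

section Bijection

variable {n : ℕ}

lemma IsLRExtremal.lt_iff_ascentWord {π : Equiv.Perm (Fin n)} (h : IsLRExtremal π) {p q : ℕ}
    (hpq : p < q) : permWord π p < permWord π q ↔ ascentWord π (q - 1) = true := by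
  rw [ascentWord, decide_eq_true_iff, Nat.sub_add_cancel (by omega : 1 ≤ q), h p q hpq,
    h (q - 1) q (by omega)]

lemma eq_of_permWord_lt_iff {π π' : Equiv.Perm (Fin n)}
    (h : ∀ p q, p < q → (permWord π p < permWord π q ↔ permWord π' p < permWord π' q)) :
    π = π' := by
  have hfin (p q : Fin n) (hpq : p < q) : π p < π q ↔ π' p < π' q := by
    simpa [permWord_lt_permWord_iff] using h p q hpq
  have hmono : StrictMono ⇑(π' * π⁻¹) := by
    intro x y hxy
    rcases lt_trichotomy (π⁻¹ x) (π⁻¹ y) with hlt | heq | hgt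
    · exact (hfin _ _ hlt).1 (by simpa using hxy)
    · simp [π⁻¹.injective heq] at hxy
    · refine lt_of_le_of_ne (not_lt.1 fun h' => ?_) (π'.injective.ne (π⁻¹.injective.ne hxy.ne))
      exact absurd ((hfin _ _ hgt).2 h') (by simpa using hxy.le)
  ext x
  simpa using congrArg Fin.val (hmono.apply_eq (x := π x)).symm

lemma IsLRExtremal.eq_of_ascentWord_eq {π π' : Equiv.Perm (Fin n)} (h : IsLRExtremal π)
    (h' : IsLRExtremal π') (hasc : ascentWord π = ascentWord π') : π = π' :=
  eq_of_permWord_lt_iff fun p q hpq => by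
    rw [h.lt_iff_ascentWord hpq, h'.lt_iff_ascentWord hpq, hasc]

end Bijection

section Construction

variable (s : ℕ → Bool) (ℓ : ℕ)

lemma count_true_add_count_false : Nat.count (s · = true) ℓ + Nat.count (s · = false) ℓ = ℓ := by
  induction ℓ with
  | zero => simp
  | succ ℓ ih => cases h : s ℓ <;> simp [Nat.count_succ, h] <;> omega

/-- The entries of the permutation of `{0,…,ℓ}` whose first entry is the number of `false`s of `s`
and whose entry `j + 1` is the next value above all earlier entries if `s j`, and the next value
below them otherwise. -/
def recordValue : ℕ → ℕ
  | 0 => Nat.count (s · = false) ℓ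
  | j + 1 => if s j then Nat.count (s · = false) ℓ + Nat.count (s · = true) (j + 1)
      else Nat.count (s · = false) ℓ - Nat.count (s · = false) (j + 1)

lemma recordValue_succ (j : ℕ) : recordValue s ℓ (j + 1) =
    if s j then Nat.count (s · = false) ℓ + Nat.count (s · = true) (j + 1)
    else Nat.count (s · = false) ℓ - Nat.count (s · = false) (j + 1) := rfl

lemma recordValue_le_add (p : ℕ) :
    recordValue s ℓ p ≤ Nat.count (s · = false) ℓ + Nat.count (s · = true) p := by
  cases p with
  | zero => simp [recordValue]
  | succ j => rw [recordValue_succ]; split_ifs <;> omega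

lemma sub_le_recordValue (p : ℕ) :
    Nat.count (s · = false) ℓ - Nat.count (s · = false) p ≤ recordValue s ℓ p := by
  cases p with
  | zero => simp [recordValue]
  | succ j => rw [recordValue_succ]; split_ifs <;> omega

variable {s ℓ}

lemma recordValue_le {p : ℕ} (hp : p ≤ ℓ) : recordValue s ℓ p ≤ ℓ := by
  have := count_true_add_count_false s ℓ
  have := Nat.count_monotone (s · = true) hp
  have := recordValue_le_add s ℓ p
  omega

lemma recordValue_lt_of_true {p q : ℕ} (hpq : p < q) (hs : s (q - 1) = true) :
    recordValue s ℓ p < recordValue s ℓ q := by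
  obtain ⟨j, rfl⟩ : ∃ j, q = j + 1 := ⟨q - 1, by omega⟩
  rw [Nat.add_sub_cancel] at hs
  have := Nat.count_monotone (s · = true) (by omega : p ≤ j)
  have := (Nat.count_lt_count_succ_iff (p := (s · = true))).2 hs
  have := recordValue_le_add s ℓ p
  rw [recordValue_succ, if_pos hs]
  omega

lemma recordValue_lt_of_false {p q : ℕ} (hpq : p < q) (hq : q ≤ ℓ) (hs : s (q - 1) = false) :
    recordValue s ℓ q < recordValue s ℓ p := by
  obtain ⟨j, rfl⟩ : ∃ j, q = j + 1 := ⟨q - 1, by omega⟩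
  rw [Nat.add_sub_cancel] at hs
  have := Nat.count_monotone (s · = false) (by omega : p ≤ j)
  have := Nat.count_monotone (s · = false) hq
  have := (Nat.count_lt_count_succ_iff (p := (s · = false))).2 hs
  have := sub_le_recordValue s ℓ p
  rw [recordValue_succ, hs, if_neg Bool.false_ne_true]
  omega

lemma recordValue_lt_iff {p q : ℕ} (hpq : p < q) (hq : q ≤ ℓ) :
    recordValue s ℓ p < recordValue s ℓ q ↔ s (q - 1) = true := by
  cases hs : s (q - 1)
  · simpa using (recordValue_lt_of_false hpq hq hs).le
  · simpa using recordValue_lt_of_true hpq hs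

lemma recordValue_injOn : Set.InjOn (recordValue s ℓ) (Set.Iic ℓ) := by
  intro p hp q hq h
  by_contra hne
  wlog hpq : p < q generalizing p q
  · exact this hq hp h.symm (Ne.symm hne) (by omega)
  cases hs : s (q - 1)
  · exact (recordValue_lt_of_false hpq hq hs).ne h.symm
  · exact (recordValue_lt_of_true hpq hs).ne h

lemma exists_isLRExtremal_ascentWord_eq {n : ℕ} (hn : 1 ≤ n) (hs : ∀ i, n - 1 ≤ i → s i = false) :
    ∃ π : Equiv.Perm (Fin n), IsLRExtremal π ∧ ascentWord π = s := by
  let f : Fin n → Fin n := fun p => ⟨recordValue s (n - 1) p, by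
    have := recordValue_le (s := s) (by omega : (p : ℕ) ≤ n - 1); omega⟩
  have hf : f.Injective := fun p q h =>
    Fin.ext (recordValue_injOn (Set.mem_Iic.2 (by omega)) (Set.mem_Iic.2 (by omega))
      (congrArg Fin.val h))
  let π := Equiv.ofBijective f (Finite.injective_iff_bijective.1 hf)
  have hπ {p : ℕ} (hp : p < n) : permWord π p = recordValue s (n - 1) p + 1 :=
    permWord_of_lt π hp
  refine ⟨π, fun p q hpq => ?_, funext fun j => ?_⟩
  · rcases lt_or_ge q n with hq | hq
    · rw [hπ hq, hπ (hpq.trans hq), hπ (by omega), Nat.add_lt_add_iff_right,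
        Nat.add_lt_add_iff_right, recordValue_lt_iff hpq (by omega),
        recordValue_lt_iff (by omega) (by omega)]
    · simp [permWord_of_le π hq]
  · rcases lt_or_ge (j + 1) n with hj | hj
    · simp only [ascentWord, hπ hj, hπ (by omega : j < n), Nat.add_lt_add_iff_right,
        recordValue_lt_iff j.lt_add_one (by omega : j + 1 ≤ n - 1), Nat.add_sub_cancel,
        Bool.decide_eq_true]
    · rw [ascentWord_eq_false π hj, hs j (by omega)]

end Construction

lemma card_avoiding_ipk_eq_zero {m n : ℕ} (hm : 2 ≤ m) (hn : 1 ≤ n) :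
    Nat.card {π : Equiv.Perm (Fin n) //
        ¬ ContainsPat π (1 : Equiv.Perm (Fin m)) ∧ ipk π = 0} = runFreeCount (m - 1) (n - 1) := by
  simp only [not_containsPat_one_iff _ hm, ipk_eq_zero_iff_isLRExtremal]
  refine Nat.card_congr (Equiv.ofBijective
    (fun π => ⟨ascentWord π.1, fun i hi => ascentWord_eq_false π.1 (by omega), π.2.1⟩) ⟨?_, ?_⟩)
  · intro π π' h
    exact Subtype.ext (π.2.2.eq_of_ascentWord_eq π'.2.2 (congrArg Subtype.val h))
  · rintro ⟨s, hs, hrun⟩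
    obtain ⟨π, hπ, rfl⟩ := exists_isLRExtremal_ascentWord_eq hn hs
    exact ⟨⟨π, hrun, hπ⟩, rfl⟩

open PowerSeries in
/-- The generating function identity for the number `b_n` of permutations in `S_n` avoiding
`12⋯m` as a consecutive pattern whose inverse has no peaks (`m ≥ 3`):
`(1 - 2x + x^m) (1 + ∑_{n≥1} b_n xⁿ) = 1 - x` in `ℤ⟦x⟧`. -/
theorem stmt18 (m : ℕ) (hm : 3 ≤ m) :
    ((1 - 2 * X + X ^ m : PowerSeries ℤ)) *
        PowerSeries.mk (fun n => if n = 0 then 1 else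
          (Nat.card {π : Equiv.Perm (Fin n) //
            ¬ ContainsPat π (1 : Equiv.Perm (Fin m)) ∧ ipk π = 0} : ℤ))
      = 1 - X := by
  have hr : 1 ≤ m - 1 := by omega
  convert one_sub_two_mul_X_add_X_pow_mul_mk (by omega : 2 ≤ m)
    (f := fun n => (runFreeCount (m - 1) (n - 1) : ℤ)) (by simp [runFreeCount_zero hr])
    (by simp [runFreeCount_zero hr]) (fun n => ?_) using 3
  · ext (_ | n)
    · simp [runFreeCount_zero hr]
    · simp [card_avoiding_ipk_eq_zero (by omega : 2 ≤ m) n.succ_pos]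
  · have := runFreeCount_recurrence hr n
    simp only [Nat.add_sub_cancel, show n + 2 - m - 1 = n - (m - 1) by omega,
      show m ≤ n + 2 ↔ m - 1 ≤ n + 1 by omega]
    exact_mod_cast this
end

section
/- Let m ≥ 3, n ≥ 1, and let w be a word of length n over the alphabet {a,b,c}. Then w ∈ W_n^{(m)} if and only if w matches the regular expression a* c [ b^{≤m−3} (c ∪ bc ∪ a⁺b ∪ a⁺c) ]* b^{≤m−3} a⁺ c*, where b^{≤t} denotes (ε ∪ b ∪ b² ∪ ⋯ ∪ b^t). -/
/-- The three-letter alphabet `{a, b, c}`. -/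
inductive ABC : Type
  | a : ABC
  | b : ABC
  | c : ABC
  deriving DecidableEq, Repr

open ABC

/-- Words matching one of the alternatives `c`, `bc`, `a⁺b`, `a⁺c` of the regular
expression `(c ∪ bc ∪ a⁺b ∪ a⁺c)`. -/
def Atom (u : List ABC) : Prop :=
  u = [c] ∨ u = [b, c] ∨
    ∃ i : ℕ, 1 ≤ i ∧ (u = List.replicate i a ++ [b] ∨ u = List.replicate i a ++ [c])

/-- Membership in `W_n`: words of length `n` of the form `a^i c u a c^j` (with `i, j ≥ 0`)
avoiding the subwords (i.e. blocks of consecutive letters) `bba`, `bbb`, `cba`, `cbb`. -/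
def Wmem (n : ℕ) (w : List ABC) : Prop :=
  w.length = n ∧
  (∃ (i j : ℕ) (u : List ABC),
      w = List.replicate i a ++ [c] ++ u ++ [a] ++ List.replicate j c) ∧
  ¬ [b, b, a] <:+: w ∧ ¬ [b, b, b] <:+: w ∧ ¬ [c, b, a] <:+: w ∧ ¬ [c, b, b] <:+: w

/-- Membership in `W_n^{(m)}`: words of length `n` of the form `a^i c u a c^j` (`i, j ≥ 0`)
avoiding the subwords `b^{m-1}a`, `b^m`, `cb^{m-2}a`, `cb^{m-1}`. -/
def WmMem (m n : ℕ) (w : List ABC) : Prop :=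
  w.length = n ∧
  (∃ (i j : ℕ) (u : List ABC),
      w = List.replicate i a ++ [c] ++ u ++ [a] ++ List.replicate j c) ∧
  ¬ (List.replicate (m - 1) b ++ [a]) <:+: w ∧
  ¬ (List.replicate m b) <:+: w ∧
  ¬ ([c] ++ List.replicate (m - 2) b ++ [a]) <:+: w ∧
  ¬ ([c] ++ List.replicate (m - 1) b) <:+: w

/-!
Each forbidden word is `x :: Q` with `x ∈ {b, c}` and `Q ∈ {b^{m-2}a, b^{m-1}}`, so `c :: r`
avoids them iff `b :: r` does: the `b` ending an `a⁺b` block constrains what follows exactly as a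
`c` does. Avoidance of `c b^j y r` with `y ≠ b` then amounts to `j ≤ m - 2`, or `j ≤ m - 3` when
`y = a`, together with avoidance of `y r`. These are exactly the runs `b^{≤m-3} c`, `b^{m-3} bc` and
`b^{≤m-3} a⁺` that the regular expression allows, so it is matched by peeling off one block at a
time.
-/

open List

section

variable {α : Type*}

def Avoids (S : Set (List α)) (w : List α) : Prop :=
  ∀ P ∈ S, ¬ P <:+: w

theorem avoids_cons_iff {S : Set (List α)} {x : α} {w : List α} :
    Avoids S (x :: w) ↔ (∀ P ∈ S, ¬ P <+: x :: w) ∧ Avoids S w := by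
  simp only [Avoids, infix_cons_iff, not_or, forall₂_and]

theorem replicate_prefix_replicate_append_cons_iff {x y : α} (hy : y ≠ x) {i j : ℕ}
    {r : List α} : replicate i x <+: replicate j x ++ y :: r ↔ i ≤ j := by
  induction i generalizing j with
  | zero => simp
  | succ i ih => cases j <;> simp [replicate_succ, hy.symm, ih]

theorem replicate_append_singleton_prefix_iff {x y z : α} (hy : y ≠ x) (hz : z ≠ x)
    {i j : ℕ} {r : List α} : replicate i x ++ [z] <+: replicate j x ++ y :: r ↔ i = j ∧ z = y := by
  induction i generalizing j with
  | zero => cases j <;> simp [replicate_succ, hz]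
  | succ i ih => cases j <;> simp [replicate_succ, hy.symm, ih]

theorem exists_eq_replicate_append (x : α) (l : List α) :
    ∃ k l', l = replicate k x ++ l' ∧ l'.head? ≠ some x := by
  induction l with
  | nil => exact ⟨0, [], rfl, by simp⟩
  | cons y l ih =>
    by_cases hy : y = x
    · obtain ⟨k, l', rfl, h⟩ := ih
      exact ⟨k + 1, l', by simp [hy, replicate_succ], h⟩
    · exact ⟨0, y :: l, rfl, by simpa using hy⟩

end

def Forbidden (m : ℕ) : Set (List ABC) :=
  {P | ∃ x ≠ a, P = x :: (replicate (m - 2) b ++ [a]) ∨ P = x :: replicate (m - 1) b}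

section Forbidden

variable {m : ℕ}

theorem avoids_forbidden_iff (hm : 2 ≤ m) {w : List ABC} :
    Avoids (Forbidden m) w ↔
      ¬ (replicate (m - 1) b ++ [a]) <:+: w ∧ ¬ (replicate m b) <:+: w ∧
      ¬ ([c] ++ replicate (m - 2) b ++ [a]) <:+: w ∧ ¬ ([c] ++ replicate (m - 1) b) <:+: w := by
  obtain ⟨k, rfl⟩ : ∃ k, m = k + 2 := ⟨m - 2, by omega⟩
  simp only [Avoids, Forbidden, Set.mem_ofPred_eq, ne_eq, forall_exists_index, and_imp]
  constructor
  · intro h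
    exact ⟨h _ b (by decide) (.inl rfl), h _ b (by decide) (.inr rfl), h _ c (by decide) (.inl rfl),
      h _ c (by decide) (.inr rfl)⟩
  · rintro ⟨h₁, h₂, h₃, h₄⟩ P x hx (rfl | rfl) <;> cases x <;> simp_all [replicate_succ]

theorem forbidden_prefix_cons_iff {y : ABC} (hy : y ≠ a) {r : List ABC} :
    (∀ P ∈ Forbidden m, ¬ P <+: y :: r) ↔
      ¬ (replicate (m - 2) b ++ [a]) <+: r ∧ ¬ replicate (m - 1) b <+: r := by
  simp only [Forbidden, Set.mem_ofPred_eq, forall_exists_index, and_imp]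
  constructor
  · intro h
    exact ⟨fun hr => h _ y hy (.inl rfl) (cons_prefix_cons.2 ⟨rfl, hr⟩),
      fun hr => h _ y hy (.inr rfl) (cons_prefix_cons.2 ⟨rfl, hr⟩)⟩
  · rintro ⟨h₁, h₂⟩ P x - (rfl | rfl) <;> rw [cons_prefix_cons] <;> tauto

theorem avoids_cons_iff_of_ne_a {y : ABC} (hy : y ≠ a) {r : List ABC} :
    Avoids (Forbidden m) (y :: r) ↔
      (¬ (replicate (m - 2) b ++ [a]) <+: r ∧ ¬ replicate (m - 1) b <+: r) ∧
        Avoids (Forbidden m) r := by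
  rw [avoids_cons_iff, forbidden_prefix_cons_iff hy]

theorem avoids_cons_congr {x y : ABC} (hx : x ≠ a) (hy : y ≠ a) {r : List ABC} :
    Avoids (Forbidden m) (x :: r) ↔ Avoids (Forbidden m) (y :: r) := by
  rw [avoids_cons_iff_of_ne_a hx, avoids_cons_iff_of_ne_a hy]

theorem avoids_a_cons_iff {r : List ABC} :
    Avoids (Forbidden m) (a :: r) ↔ Avoids (Forbidden m) r := by
  rw [avoids_cons_iff, and_iff_right_iff_imp]
  rintro - P ⟨x, hx, rfl | rfl⟩ h <;> exact hx (cons_prefix_cons.1 h).1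

theorem avoids_replicate_a_append_iff {p : ℕ} {r : List ABC} :
    Avoids (Forbidden m) (replicate p a ++ r) ↔ Avoids (Forbidden m) r := by
  induction p with
  | zero => rfl
  | succ p ih => rw [replicate_succ, cons_append, avoids_a_cons_iff, ih]

theorem avoids_of_b_not_mem (hm : 3 ≤ m) {w : List ABC} (hw : b ∉ w) :
    Avoids (Forbidden m) w := by
  rintro P ⟨x, -, rfl | rfl⟩ hP <;> refine hw (hP.subset ?_) <;> simp <;> omega

theorem c_run_not_prefix_iff (hm : 2 ≤ m) {y : ABC} (hy : y ≠ b) {j : ℕ} {r : List ABC} :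
    (¬ (replicate (m - 2) b ++ [a]) <+: replicate j b ++ y :: r ∧
        ¬ replicate (m - 1) b <+: replicate j b ++ y :: r) ↔
      j + 2 ≤ m ∧ (y = a → j + 3 ≤ m) := by
  rw [replicate_append_singleton_prefix_iff hy (by decide),
    replicate_prefix_replicate_append_cons_iff hy]
  rcases eq_or_ne y a with rfl | hya
  · simp only [and_true, forall_const]
    omega
  · simp only [Ne.symm hya, hya, and_false, not_false_eq_true, true_and, IsEmpty.forall_iff,
      and_true]
    omega

theorem avoids_c_replicate_b_cons_iff (hm : 2 ≤ m) {y : ABC} (hy : y ≠ b) {j : ℕ}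
    {r : List ABC} :
    Avoids (Forbidden m) (c :: (replicate j b ++ y :: r)) ↔
      (j + 2 ≤ m ∧ (y = a → j + 3 ≤ m)) ∧ Avoids (Forbidden m) (y :: r) := by
  induction j with
  | zero => rw [avoids_cons_iff_of_ne_a (by decide), c_run_not_prefix_iff hm hy]; rfl
  | succ j ih =>
    rw [avoids_cons_iff_of_ne_a (by decide), c_run_not_prefix_iff hm hy, replicate_succ,
      cons_append, avoids_cons_congr (x := b) (y := c) (by decide) (by decide), ih, ← and_assoc]
    refine and_congr_left fun _ => and_iff_left_of_imp ?_
    exact fun ⟨h, ha⟩ => ⟨by omega, fun hya => by have := ha hya; omega⟩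

theorem avoids_c_replicate_b_c_cons_iff (hm : 2 ≤ m) {j : ℕ} {r : List ABC} :
    Avoids (Forbidden m) (c :: (replicate j b ++ c :: r)) ↔
      j + 2 ≤ m ∧ Avoids (Forbidden m) (c :: r) := by
  simp [avoids_c_replicate_b_cons_iff hm]

theorem avoids_c_replicate_b_replicate_a_append_iff (hm : 2 ≤ m) {j p : ℕ} (hp : 1 ≤ p)
    {r : List ABC} :
    Avoids (Forbidden m) (c :: (replicate j b ++ (replicate p a ++ r))) ↔
      j + 3 ≤ m ∧ Avoids (Forbidden m) r := by
  obtain ⟨p, rfl⟩ : ∃ p', p = p' + 1 := ⟨p - 1, by omega⟩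
  rw [replicate_succ, cons_append, avoids_c_replicate_b_cons_iff hm (by decide), avoids_a_cons_iff,
    avoids_replicate_a_append_iff]
  refine and_congr_left fun _ => ?_
  simp only [forall_const]
  omega

end Forbidden

def BlocksTail (m : ℕ) (r : List ABC) : Prop :=
  ∃ (t p q : ℕ) (L : List (List ABC)),
    (∀ u ∈ L, ∃ (s : ℕ) (v : List ABC), s ≤ m - 3 ∧ Atom v ∧ u = replicate s b ++ v) ∧
    t ≤ m - 3 ∧ 1 ≤ p ∧ r = L.flatten ++ replicate t b ++ replicate p a ++ replicate q c

namespace BlocksTail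

variable {m : ℕ}

theorem tail {t p : ℕ} (ht : t ≤ m - 3) (hp : 1 ≤ p) (q : ℕ) :
    BlocksTail m (replicate t b ++ (replicate p a ++ replicate q c)) :=
  ⟨t, p, q, [], by simp, ht, hp, by simp⟩

theorem block {s : ℕ} {v r : List ABC} (hs : s ≤ m - 3) (hv : Atom v) :
    BlocksTail m r → BlocksTail m (replicate s b ++ (v ++ r))
  | ⟨t, p, q, L, hL, ht, hp, hr⟩ =>
    ⟨t, p, q, (replicate s b ++ v) :: L, forall_mem_cons.2 ⟨⟨s, v, hs, hv, rfl⟩, hL⟩, ht, hp,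
      by simp [hr]⟩

theorem c_cons (hm : 3 ≤ m) {s : ℕ} {r : List ABC} (hs : s + 2 ≤ m) (h : BlocksTail m r) :
    BlocksTail m (replicate s b ++ c :: r) := by
  rcases Nat.lt_or_ge s (m - 2) with hs' | hs'
  · exact block (v := [c]) (by omega) (.inl rfl) h
  · have hbc := block (v := [b, c]) (le_refl (m - 3)) (.inr (.inl rfl)) h
    rwa [show replicate (m - 3) b ++ ([b, c] ++ r) = replicate s b ++ c :: r by
      rw [show s = m - 3 + 1 by omega, replicate_succ']; simp] at hbc

end BlocksTail

theorem atom_replicate_a_append {p : ℕ} (hp : 1 ≤ p) {x : ABC} (hx : x ≠ a) :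
    Atom (replicate p a ++ [x]) := by
  cases x with
  | a => exact absurd rfl hx
  | b => exact .inr (.inr ⟨p, hp, .inl rfl⟩)
  | c => exact .inr (.inr ⟨p, hp, .inr rfl⟩)

section Regex

variable {m : ℕ}

theorem avoids_c_replicate_b_atom_append (hm : 3 ≤ m) {s : ℕ} {v r : List ABC}
    (hs : s ≤ m - 3) (hv : Atom v) (hr : Avoids (Forbidden m) (c :: r)) :
    Avoids (Forbidden m) (c :: (replicate s b ++ (v ++ r))) := by
  rcases hv with rfl | rfl | ⟨i, hi, rfl | rfl⟩
  · exact (avoids_c_replicate_b_c_cons_iff (by omega)).2 ⟨by omega, hr⟩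
  · rw [show replicate s b ++ ([b, c] ++ r) = replicate (s + 1) b ++ c :: r by
      simp [replicate_succ']]
    exact (avoids_c_replicate_b_c_cons_iff (by omega)).2 ⟨by omega, hr⟩
  · rw [append_assoc]
    exact (avoids_c_replicate_b_replicate_a_append_iff (by omega) hi).2
      ⟨by omega, (avoids_cons_congr (by decide) (by decide)).1 hr⟩
  · rw [append_assoc]
    exact (avoids_c_replicate_b_replicate_a_append_iff (by omega) hi).2 ⟨by omega, hr⟩

theorem avoids_of_blocksTail (hm : 3 ≤ m) {r : List ABC} :
    BlocksTail m r → Avoids (Forbidden m) (c :: r)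
  | ⟨t, p, q, L, hL, ht, hp, hr⟩ => by
    subst hr
    induction L with
    | nil =>
      simpa using (avoids_c_replicate_b_replicate_a_append_iff (by omega) hp).2
        ⟨by omega, avoids_of_b_not_mem hm (by simp)⟩
    | cons u L ih =>
      obtain ⟨s, v, hs, hv, rfl⟩ := hL u mem_cons_self
      simpa using avoids_c_replicate_b_atom_append hm hs hv
        (ih fun u hu => hL u (mem_cons_of_mem _ hu))

theorem blocksTail_of_avoids (hm : 3 ≤ m) (q : ℕ) (u : List ABC)
    (h : Avoids (Forbidden m) (c :: (u ++ a :: replicate q c))) :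
    BlocksTail m (u ++ a :: replicate q c) := by
  induction hn : u.length using Nat.strong_induction_on generalizing u with | _ n ih =>
  obtain ⟨s, u₁, rfl, hb⟩ := exists_eq_replicate_append b u
  obtain ⟨p, u₂, rfl, ha⟩ := exists_eq_replicate_append a u₁
  rcases u₂ with _ | ⟨x, u₃⟩
  · obtain ⟨hs, -⟩ := (avoids_c_replicate_b_replicate_a_append_iff (by omega : 2 ≤ m)
      (Nat.le_add_left 1 p)).1 (by simpa [replicate_succ'] using h)
    simpa [replicate_succ'] using BlocksTail.tail (by omega : s ≤ m - 3) (Nat.le_add_left 1 p) q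
  · rcases Nat.eq_zero_or_pos p with rfl | hp
    · obtain rfl : x = c := by cases x <;> simp_all
      simp only [replicate_zero, nil_append, append_assoc, cons_append] at h ⊢
      obtain ⟨hs, hrest⟩ := (avoids_c_replicate_b_c_cons_iff (by omega)).1 h
      exact BlocksTail.c_cons hm hs (ih _ (by simp [← hn]; omega) u₃ hrest rfl)
    · have hx : x ≠ a := by simpa using ha
      simp only [append_assoc, cons_append] at h ⊢
      obtain ⟨hs, hrest⟩ := (avoids_c_replicate_b_replicate_a_append_iff (by omega) hp).1 h
      simpa using BlocksTail.block (by omega : s ≤ m - 3) (atom_replicate_a_append hp hx)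
        (ih _ (by simp [← hn]; omega) u₃ ((avoids_cons_congr hx (by decide)).1 hrest) rfl)

end Regex

theorem stmt19_general (m n : ℕ) (hm : 3 ≤ m) (w : List ABC) (hw : w.length = n) :
    WmMem m n w ↔
      ∃ (i t p q : ℕ) (L : List (List ABC)),
        (∀ u ∈ L, ∃ (s : ℕ) (v : List ABC),
            s ≤ m - 3 ∧ Atom v ∧ u = List.replicate s b ++ v) ∧
        t ≤ m - 3 ∧ 1 ≤ p ∧
        w = List.replicate i a ++ [c] ++ L.flatten ++ List.replicate t b
              ++ List.replicate p a ++ List.replicate q c := by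
  rw [WmMem, ← avoids_forbidden_iff (by omega)]
  constructor
  · rintro ⟨-, ⟨i, j, u, rfl⟩, hav⟩
    obtain ⟨t, p, q, L, hL, ht, hp, hr⟩ :=
      blocksTail_of_avoids hm j u (by simpa [avoids_replicate_a_append_iff] using hav)
    exact ⟨i, t, p, q, L, hL, ht, hp, by simp [hr]⟩
  · rintro ⟨i, t, p, q, L, hL, ht, hp, rfl⟩
    refine ⟨hw, ⟨i, q, L.flatten ++ replicate t b ++ replicate (p - 1) a, ?_⟩, ?_⟩
    · obtain ⟨p, rfl⟩ : ∃ p', p = p' + 1 := ⟨p - 1, by omega⟩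
      simp [replicate_succ']
    · simpa [avoids_replicate_a_append_iff] using
        avoids_of_blocksTail hm ⟨t, p, q, L, hL, ht, hp, rfl⟩

/-- For `m ≥ 3`, `n ≥ 1` and a word `w` of length `n` over `{a,b,c}`, we have
`w ∈ W_n^{(m)}` if and only if `w` matches the regular expression
`a* c [b^{≤m-3} (c ∪ bc ∪ a⁺b ∪ a⁺c)]* b^{≤m-3} a⁺ c*`. -/
theorem stmt19 (m n : ℕ) (hm : 3 ≤ m) (hn : 1 ≤ n) (w : List ABC) (hw : w.length = n) :
    WmMem m n w ↔
      ∃ (i t p q : ℕ) (L : List (List ABC)),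
        (∀ u ∈ L, ∃ (s : ℕ) (v : List ABC),
            s ≤ m - 3 ∧ Atom v ∧ u = List.replicate s b ++ v) ∧
        t ≤ m - 3 ∧ 1 ≤ p ∧
        w = List.replicate i a ++ [c] ++ L.flatten ++ List.replicate t b
              ++ List.replicate p a ++ List.replicate q c :=
  stmt19_general m n hm w hw
end
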